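/- Let F = 𝔽_{2^m}, let S ⊆ F with 0 ∉ S, 1 ∈ S, and S generating the additive group of F, and let c, d ∈ F with c + d ∈ S, c ≠ 0, c ≠ 1. Suppose Γ = Cay(F, S) has PEST from the edge (0,1) to the edge (c,d) at time t > 0. Fix x₀ ∈ F with Tr(c x₀) = 0 and Tr(x₀) = 1, and let M = gcd{λ_{x₀} − λ_x : x ∈ T₁, x ≠ x₀}. Then t = (2u+1)π/M for some non-negative integer u; in particular, the minimum time at which Γ has PEST from (0,1) to (c,d) is π/M. -/

import Mathlib

open Matrix Finset

noncomputable section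

noncomputable instance (m : ℕ) : Fintype (GaloisField 2 m) := Fintype.ofFinite _
noncomputable instance (m : ℕ) : DecidableEq (GaloisField 2 m) := Classical.decEq _

/-- The absolute trace map `Tr : 𝔽_{2^m} → 𝔽₂`. -/
def Ftr {m : ℕ} (x : GaloisField 2 m) : ZMod 2 :=
  Algebra.trace (ZMod 2) (GaloisField 2 m) x

/-- The adjacency matrix of the Cayley (cubelike) graph `Cay(G, S)`. -/
def adjMatrix {G : Type*} [AddCommGroup G] [Fintype G] [DecidableEq G]
    (S : Finset G) : Matrix G G ℂ :=
  fun u v => if u + v ∈ S then 1 else 0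

/-- The transfer matrix `H(t) = exp(i t A)`. -/
def transferMatrix {G : Type*} [AddCommGroup G] [Fintype G] [DecidableEq G]
    (S : Finset G) (t : ℝ) : Matrix G G ℂ :=
  NormedSpace.exp (Complex.I • ((t : ℂ) • adjMatrix S))

/-- The standard basis vector `e_a` of `ℂ^V`. -/
def stdBasis {G : Type*} [DecidableEq G] (a : G) : G → ℂ :=
  fun v => if v = a then 1 else 0

/-- Perfect edge state transfer from the edge `(a,b)` to the edge `(c,d)` at time `t`:
`|(1/2)(e_c - e_d)ᵀ H(t)(e_a - e_b)|² = 1`. -/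
def hasPEST {G : Type*} [AddCommGroup G] [Fintype G] [DecidableEq G]
    (S : Finset G) (a b c d : G) (t : ℝ) : Prop :=
  ‖(1 / 2 : ℂ) * dotProduct (stdBasis c - stdBasis d)
      (transferMatrix S t *ᵥ (stdBasis a - stdBasis b))‖ ^ 2 = 1

/-- The eigenvalue `λ_x = ∑_{s ∈ S} (-1)^{Tr(xs)}` of a cubelike graph on `𝔽_{2^m}`. -/
def lamF {m : ℕ} (S : Finset (GaloisField 2 m)) (x : GaloisField 2 m) : ℤ :=
  ∑ s ∈ S, (-1) ^ (Ftr (x * s)).val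

/-!
The characters `v ↦ (-1)^{Tr(xv)}` diagonalise every cubelike graph on `𝔽_{2^m}`, which turns the
amplitude `(1/2)(e_c - e_d)ᵀ H(t)(e_0 - e_1)` into the average over `x ∈ T₁` of the numbers
`e^{itλ_x}((-1)^{Tr(cx)} - (-1)^{Tr(dx)})/2`, each of modulus at most one. The average has modulus
one only if all of them coincide and have modulus one; this forces `d = c + 1` and, with
`Tr(cx₀) = 0`, it says `e^{it(λ_{x₀} - λ_x)} = (-1)^{Tr(cx)}` for `x ∈ T₁ \ {x₀}`.
So `t(λ_{x₀} - λ_x) ∈ πℤ` for all these `x`, and Bézout gives `tM ∈ πℤ`; a point `x₁ ∈ T₁` with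
`Tr(cx₁) = 1` (it exists because `c ≠ 0`) then forces `e^{itM} = -1`, i.e. `tM` is an odd multiple
of `π`. As `M` divides every `λ_{x₀} - λ_x`, the phases only depend on `e^{itM}`, so `π/M` is a
PEST time as well.
-/

open Complex

lemma Matrix.exp_smul_conj_diagonal {n : Type*} [Fintype n] [DecidableEq n]
    (K : Matrix n n ℂ) (hK : IsUnit K) (v : n → ℂ) (z : ℂ) :
    NormedSpace.exp (z • (K * diagonal v * K⁻¹)) =
      K * diagonal (fun i => cexp (z * v i)) * K⁻¹ := by
  have hconj : z • (K * diagonal v * K⁻¹) = K * diagonal (z • v) * K⁻¹ := by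
    rw [diagonal_smul, Matrix.mul_smul, Matrix.smul_mul]
  rw [hconj, Matrix.exp_conj _ _ hK, Matrix.exp_diagonal]
  congr
  funext i
  rw [Pi.coe_exp, ← Complex.exp_eq_exp_ℂ]
  rfl

lemma sub_dotProduct_mulVec_sub {n : Type*} [Fintype n] [DecidableEq n] (A : Matrix n n ℂ)
    (a b c d : n) :
    (_root_.stdBasis c - _root_.stdBasis d) ⬝ᵥ (A *ᵥ (_root_.stdBasis a - _root_.stdBasis b)) =
      A c a - A c b - (A d a - A d b) := by
  have h (i : n) : _root_.stdBasis i = Pi.single i (1 : ℂ) := by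
    funext j; simp [_root_.stdBasis, Pi.single_apply]
  simp [h, Matrix.mulVec_sub, sub_dotProduct]
  ring

section CharacterMatrix

variable {R : Type*} [CommRing R] [Fintype R] [DecidableEq R] [CharP R 2] (ψ : AddChar R ℂ)

def charMatrix : Matrix R R ℂ := Matrix.of fun x v => ψ (x * v)

lemma charMatrix_mul_self (hψ : ψ.IsPrimitive) :
    charMatrix ψ * charMatrix ψ = (Fintype.card R : ℂ) • 1 := by
  ext x y
  have hsum : ∑ v, ψ (x * v) * ψ (v * y) = ∑ v, ψ (v * (x + y)) :=
    Finset.sum_congr rfl fun v _ => by rw [← AddChar.map_add_eq_mul, mul_add, mul_comm x]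
  simp only [charMatrix, Matrix.mul_apply, Matrix.of_apply, hsum, AddChar.sum_mulShift _ hψ,
    CharTwo.add_eq_zero, Matrix.smul_apply, Matrix.one_apply, smul_eq_mul]
  split_ifs <;> simp

lemma adjMatrix_mul_charMatrix (S : Finset R) :
    adjMatrix S * charMatrix ψ = charMatrix ψ * diagonal fun x => ∑ s ∈ S, ψ (x * s) := by
  ext u x
  have hshift : ∑ v, (if u + v ∈ S then ψ (v * x) else 0) =
      ∑ w, if w ∈ S then ψ ((u + w) * x) else 0 :=
    Fintype.sum_equiv (Equiv.addLeft u) _ _ fun v => by simp [CharTwo.add_cancel_left]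
  rw [Matrix.mul_diagonal, Matrix.mul_apply]
  simp only [adjMatrix, charMatrix, Matrix.of_apply, ite_mul, one_mul, zero_mul, hshift,
    Finset.sum_ite_mem, Finset.univ_inter, Finset.mul_sum]
  refine Finset.sum_congr rfl fun s _ => ?_
  rw [add_mul, AddChar.map_add_eq_mul, mul_comm s x]

lemma charMatrix_mul_inv_card_smul (hψ : ψ.IsPrimitive) :
    charMatrix ψ * ((Fintype.card R : ℂ)⁻¹ • charMatrix ψ) = 1 := by
  rw [Matrix.mul_smul, charMatrix_mul_self ψ hψ, smul_smul,
    inv_mul_cancel₀ (Nat.cast_ne_zero.2 Fintype.card_ne_zero), one_smul]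

lemma transferMatrix_apply (hψ : ψ.IsPrimitive) (S : Finset R) (t : ℝ) (u v : R) :
    transferMatrix S t u v = (Fintype.card R : ℂ)⁻¹ *
      ∑ x, ψ (u * x) * cexp (t * (∑ s ∈ S, ψ (x * s)) * I) * ψ (x * v) := by
  have hinv := charMatrix_mul_inv_card_smul ψ hψ
  have hunit : IsUnit (charMatrix ψ) :=
    (Matrix.isUnit_iff_isUnit_det _).2 (Matrix.isUnit_det_of_right_inverse hinv)
  have hA : adjMatrix S =
      charMatrix ψ * diagonal (fun x => ∑ s ∈ S, ψ (x * s)) * (charMatrix ψ)⁻¹ := by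
    rw [← adjMatrix_mul_charMatrix,
      Matrix.mul_nonsing_inv_cancel_right _ _ ((Matrix.isUnit_iff_isUnit_det _).1 hunit)]
  rw [transferMatrix, smul_smul, hA, Matrix.exp_smul_conj_diagonal _ hunit,
    Matrix.inv_eq_right_inv hinv, Matrix.mul_smul, Matrix.smul_apply, Matrix.mul_apply,
    smul_eq_mul]
  simp only [Matrix.mul_diagonal, charMatrix, Matrix.of_apply]
  congr 1
  refine Finset.sum_congr rfl fun x _ => ?_
  rw [mul_comm I, mul_right_comm (t : ℂ)]

end CharacterMatrix

section TraceCharacter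

variable {m : ℕ}

lemma Ftr_add (x y : GaloisField 2 m) : Ftr (x + y) = Ftr x + Ftr y := map_add _ x y

lemma Ftr_surjective : Function.Surjective (Ftr (m := m)) :=
  Algebra.trace_surjective _ _

lemma ZMod.eq_zero_or_eq_one (a : ZMod 2) : a = 0 ∨ a = 1 := by
  revert a; decide

lemma exists_Ftr_eq_one_Ftr_mul_eq_one {c : GaloisField 2 m} (hc : c ≠ 0) :
    ∃ x, Ftr x = 1 ∧ Ftr (c * x) = 1 := by
  obtain ⟨x, hx⟩ := Ftr_surjective (m := m) 1
  obtain ⟨y, hy⟩ := Ftr_surjective (m := m) 1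
  have hy' : Ftr (c * (c⁻¹ * y)) = 1 := by rw [← mul_assoc, mul_inv_cancel₀ hc, one_mul, hy]
  rcases (Ftr (c * x)).eq_zero_or_eq_one with hcx | hcx
  · rcases (Ftr (c⁻¹ * y)).eq_zero_or_eq_one with hz | hz
    · exact ⟨x + c⁻¹ * y, by rw [Ftr_add, hx, hz, add_zero],
        by rw [mul_add, Ftr_add, hcx, hy', zero_add]⟩
    · exact ⟨c⁻¹ * y, hz, hy'⟩
  · exact ⟨x, hx, hcx⟩

lemma exists_Ftr_eq_one_Ftr_mul_eq_zero {a : GaloisField 2 m} (ha : a ≠ 1) :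
    ∃ x, Ftr x = 1 ∧ Ftr (a * x) = 0 := by
  obtain ⟨x, hx, hax⟩ := exists_Ftr_eq_one_Ftr_mul_eq_one (c := a + 1)
    (fun h => ha (CharTwo.add_eq_zero.1 h))
  refine ⟨x, hx, ?_⟩
  rwa [add_mul, one_mul, Ftr_add, hx, add_eq_right] at hax

variable (m) in
def traceChar : AddChar (GaloisField 2 m) ℂ where
  toFun v := (-1) ^ (Ftr v).val
  map_zero_eq_one' := by simp [Ftr]
  map_add_eq_mul' x y := by
    rw [Ftr_add, ZMod.val_add, ← pow_add, ← neg_one_pow_eq_pow_mod_two]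

lemma traceChar_apply (v : GaloisField 2 m) : traceChar m v = (-1) ^ (Ftr v).val := rfl

lemma traceChar_of_Ftr_eq_zero {v : GaloisField 2 m} (h : Ftr v = 0) : traceChar m v = 1 := by
  rw [traceChar_apply, h, ZMod.val_zero, pow_zero]

lemma traceChar_of_Ftr_eq_one {v : GaloisField 2 m} (h : Ftr v = 1) : traceChar m v = -1 := by
  rw [traceChar_apply, h, ZMod.val_one, pow_one]

lemma one_sub_traceChar (v : GaloisField 2 m) :
    1 - traceChar m v = if Ftr v = 1 then 2 else 0 := by
  rcases (Ftr v).eq_zero_or_eq_one with h | h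
  · simp [traceChar_apply, h]
  · rw [traceChar_of_Ftr_eq_one h, if_pos h]
    norm_num

lemma traceChar_sq (v : GaloisField 2 m) : traceChar m v ^ 2 = 1 := by
  rw [← AddChar.map_nsmul_eq_pow, CharTwo.two_nsmul, AddChar.map_zero_eq_one]

lemma traceChar_ne_one : traceChar m ≠ 1 := fun h => by
  obtain ⟨v, hv⟩ := Ftr_surjective (m := m) 1
  have := traceChar_of_Ftr_eq_one hv
  rw [h, AddChar.one_apply] at this
  norm_num at this

lemma isPrimitive_traceChar : (traceChar m).IsPrimitive :=
  AddChar.IsPrimitive.of_ne_one traceChar_ne_one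

lemma lamF_eq_sum_traceChar (S : Finset (GaloisField 2 m)) (x : GaloisField 2 m) :
    (lamF S x : ℂ) = ∑ s ∈ S, traceChar m (x * s) := by
  simp [lamF, traceChar_apply]

variable (m) in
def traceOneSet : Finset (GaloisField 2 m) := univ.filter fun x => Ftr x = 1

lemma mem_traceOneSet {x : GaloisField 2 m} : x ∈ traceOneSet m ↔ Ftr x = 1 := by
  simp [traceOneSet]

lemma card_eq_two_mul_card_traceOneSet :
    (Fintype.card (GaloisField 2 m) : ℂ) = 2 * #(traceOneSet m) := by
  calc (Fintype.card (GaloisField 2 m) : ℂ) = ∑ v, (1 - traceChar m v) := by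
        rw [Finset.sum_sub_distrib, AddChar.sum_eq_zero_of_ne_one traceChar_ne_one]
        simp
    _ = ∑ v, if Ftr v = 1 then 2 else 0 := Finset.sum_congr rfl fun v _ => one_sub_traceChar v
    _ = 2 * #(traceOneSet m) := by
        rw [Finset.sum_ite, Finset.sum_const_zero, add_zero, Finset.sum_const, nsmul_eq_mul,
          traceOneSet, mul_comm]

end TraceCharacter

open ComplexConjugate

lemma Complex.eq_one_of_norm_le_one_of_re_eq_one {z : ℂ} (hz : ‖z‖ ≤ 1) (hre : z.re = 1) :
    z = 1 := by
  have him : z.im ^ 2 ≤ 0 := by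
    rw [← sq_norm_sub_sq_re, hre]
    nlinarith [norm_nonneg z]
  exact Complex.ext hre (pow_eq_zero_iff two_ne_zero |>.1 (le_antisymm him (sq_nonneg _)))

lemma Finset.eq_of_norm_le_one_of_norm_sum_eq_card {ι : Type*} {s : Finset ι} {w : ι → ℂ}
    (hw : ∀ i ∈ s, ‖w i‖ ≤ 1) (h : ‖∑ i ∈ s, w i‖ = #s) {i j : ι} (hi : i ∈ s) (hj : j ∈ s) :
    w i = w j := by
  have hs : (#s : ℂ) ≠ 0 := Nat.cast_ne_zero.2 (card_ne_zero_of_mem hi)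
  set γ : ℂ := (∑ k ∈ s, w k) / #s with hγ_def
  have hγ : ‖γ‖ = 1 := by
    rw [norm_div, h, norm_natCast, div_self (by exact_mod_cast hs)]
  have hle : ∀ k ∈ s, ‖conj γ * w k‖ ≤ 1 := fun k hk => by
    rw [norm_mul, norm_conj, hγ, one_mul]
    exact hw k hk
  -- the average `γ` is a unit vector, so every `w k` must point exactly in its direction
  have hsum : ∑ k ∈ s, (conj γ * w k).re = ∑ _k ∈ s, (1 : ℝ) := by
    have hmul : conj γ * ∑ k ∈ s, w k = #s := by
      rw [show ∑ k ∈ s, w k = γ * #s by rw [hγ_def, div_mul_cancel₀ _ hs], ← mul_assoc,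
        conj_mul', hγ]
      simp
    rw [← re_sum, ← Finset.mul_sum, hmul, Finset.sum_const, nsmul_eq_mul, mul_one, natCast_re]
  have hre := (Finset.sum_eq_sum_iff_of_le fun k hk => (re_le_norm _).trans (hle k hk)).1 hsum
  have hγw : ∀ k ∈ s, w k = γ := fun k hk => by
    have h1 := eq_one_of_norm_le_one_of_re_eq_one (hle k hk) (hre k hk)
    calc w k = γ * conj γ * w k := by rw [mul_conj', hγ]; simp
      _ = γ := by rw [mul_assoc, h1, mul_one]
  rw [hγw i hi, hγw j hj]

section EdgeTransfer

variable {m : ℕ}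

def edgePhase (S : Finset (GaloisField 2 m)) (c d : GaloisField 2 m) (t : ℝ)
    (x : GaloisField 2 m) : ℂ :=
  cexp (t * lamF S x * I) * (traceChar m (c * x) - traceChar m (d * x)) / 2

lemma norm_cexp_mul_intCast_mul_I (t : ℝ) (n : ℤ) : ‖cexp (t * n * I)‖ = 1 := by
  rw [← ofReal_intCast, ← ofReal_mul, norm_exp_ofReal_mul_I]

lemma norm_edgePhase_le (S : Finset (GaloisField 2 m)) (c d : GaloisField 2 m) (t : ℝ)
    (x : GaloisField 2 m) : ‖edgePhase S c d t x‖ ≤ 1 := by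
  have h := norm_sub_le (traceChar m (c * x)) (traceChar m (d * x))
  rw [AddChar.norm_apply, AddChar.norm_apply] at h
  rw [edgePhase, norm_div, norm_mul, norm_cexp_mul_intCast_mul_I, Complex.norm_two]
  linarith

lemma edgePhase_eq_zero {S : Finset (GaloisField 2 m)} {c d x : GaloisField 2 m} (t : ℝ)
    (h : Ftr ((c + d) * x) = 0) : edgePhase S c d t x = 0 := by
  have hdx : d * x = c * x + (c + d) * x := by
    rw [add_mul, ← add_assoc, CharTwo.add_self_eq_zero, zero_add]
  rw [edgePhase, hdx, AddChar.map_add_eq_mul, traceChar_of_Ftr_eq_zero h, mul_one, sub_self,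
    mul_zero, zero_div]

lemma edgePhase_add_one (S : Finset (GaloisField 2 m)) (c : GaloisField 2 m) (t : ℝ)
    {x : GaloisField 2 m} (hx : Ftr x = 1) :
    edgePhase S c (c + 1) t x = traceChar m (c * x) * cexp (t * lamF S x * I) := by
  rw [edgePhase, add_mul, one_mul, AddChar.map_add_eq_mul, traceChar_of_Ftr_eq_one hx]
  ring

lemma edgeAmplitude_eq (S : Finset (GaloisField 2 m)) (c d : GaloisField 2 m) (t : ℝ) :
    (1 / 2 : ℂ) * (_root_.stdBasis c - _root_.stdBasis d) ⬝ᵥ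
        (transferMatrix S t *ᵥ (_root_.stdBasis 0 - _root_.stdBasis 1)) =
      (#(traceOneSet m) : ℂ)⁻¹ * ∑ x ∈ traceOneSet m, edgePhase S c d t x := by
  have hcol (u : GaloisField 2 m) : transferMatrix S t u 0 - transferMatrix S t u 1 =
      (Fintype.card (GaloisField 2 m) : ℂ)⁻¹ *
        ∑ x, traceChar m (u * x) * cexp (t * lamF S x * I) * (1 - traceChar m x) := by
    simp only [transferMatrix_apply _ isPrimitive_traceChar, ← lamF_eq_sum_traceChar, mul_zero,
      mul_one, AddChar.map_zero_eq_one, mul_sub, Finset.sum_sub_distrib]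
  rw [sub_dotProduct_mulVec_sub, hcol, hcol, ← mul_sub, ← Finset.sum_sub_distrib,
    card_eq_two_mul_card_traceOneSet, traceOneSet, Finset.sum_filter, Finset.mul_sum,
    Finset.mul_sum, Finset.mul_sum]
  refine Finset.sum_congr rfl fun x _ => ?_
  rw [one_sub_traceChar, edgePhase]
  split_ifs <;> ring

end EdgeTransfer

section PerfectEdgeStateTransfer

variable {m : ℕ} {S : Finset (GaloisField 2 m)} {c d : GaloisField 2 m} {t : ℝ}

lemma hasPEST_iff_norm_sum_edgePhase :
    hasPEST S 0 1 c d t ↔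
      ‖∑ x ∈ traceOneSet m, edgePhase S c d t x‖ = #(traceOneSet m) := by
  obtain ⟨v, hv⟩ := Ftr_surjective (m := m) 1
  have hT : (#(traceOneSet m) : ℝ) ≠ 0 :=
    Nat.cast_ne_zero.2 (card_ne_zero_of_mem (mem_traceOneSet.2 hv))
  rw [hasPEST, edgeAmplitude_eq, pow_eq_one_iff_of_nonneg (norm_nonneg _) two_ne_zero, norm_mul,
    norm_inv, norm_natCast, inv_mul_eq_one₀ hT, eq_comm]

lemma hasPEST_zero_one_iff {x₀ : GaloisField 2 m} (hx₀ : Ftr x₀ = 1) :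
    hasPEST S 0 1 c d t ↔ d = c + 1 ∧ ∀ x ∈ traceOneSet m,
      traceChar m (c * x) * cexp (t * lamF S x * I) =
        traceChar m (c * x₀) * cexp (t * lamF S x₀ * I) := by
  have hx₀T := mem_traceOneSet.2 hx₀
  rw [hasPEST_iff_norm_sum_edgePhase]
  constructor
  · intro h
    have heq : ∀ x ∈ traceOneSet m, edgePhase S c d t x = edgePhase S c d t x₀ := fun x hx =>
      Finset.eq_of_norm_le_one_of_norm_sum_eq_card (fun y _ => norm_edgePhase_le S c d t y) h
        hx hx₀T
    have hd : d = c + 1 := by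
      by_contra hd
      obtain ⟨x, hx, hcdx⟩ := exists_Ftr_eq_one_Ftr_mul_eq_zero (a := c + d) fun h' => hd <| by
        rw [add_comm, CharTwo.add_eq_iff_eq_add] at h'
        rw [h', add_comm]
      have hzero : ∀ y ∈ traceOneSet m, edgePhase S c d t y = 0 := fun y hy =>
        (heq y hy).trans ((heq x (mem_traceOneSet.2 hx)).symm.trans (edgePhase_eq_zero t hcdx))
      rw [Finset.sum_eq_zero hzero, norm_zero] at h
      exact card_ne_zero_of_mem hx₀T (by exact_mod_cast h.symm)
    subst hd
    refine ⟨rfl, fun x hx => ?_⟩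
    rw [← edgePhase_add_one _ _ _ (mem_traceOneSet.1 hx), ← edgePhase_add_one _ _ _ hx₀,
      heq x hx]
  · rintro ⟨rfl, hz⟩
    rw [Finset.sum_congr rfl fun x hx =>
        (edgePhase_add_one S c t (mem_traceOneSet.1 hx)).trans (hz x hx),
      Finset.sum_const, nsmul_eq_mul, norm_mul, norm_natCast, norm_mul, AddChar.norm_apply,
      norm_cexp_mul_intCast_mul_I, mul_one, mul_one]

lemma hasPEST_zero_one_iff_forall_cexp {x₀ : GaloisField 2 m} (hx₀ : Ftr x₀ = 1)
    (hcx₀ : Ftr (c * x₀) = 0) :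
    hasPEST S 0 1 c d t ↔ d = c + 1 ∧
      ∀ x ∈ univ.filter (fun x : GaloisField 2 m => Ftr x = 1 ∧ x ≠ x₀),
        cexp (t * (lamF S x₀ - lamF S x : ℤ) * I) = traceChar m (c * x) := by
  have hphase (x : GaloisField 2 m) :
      traceChar m (c * x) * cexp (t * lamF S x * I) = cexp (t * lamF S x₀ * I) ↔
        cexp (t * (lamF S x₀ - lamF S x : ℤ) * I) = traceChar m (c * x) := by
    rw [Int.cast_sub, mul_sub, sub_mul, Complex.exp_sub, div_eq_iff (Complex.exp_ne_zero _),
      eq_comm]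
  rw [hasPEST_zero_one_iff hx₀, traceChar_of_Ftr_eq_zero hcx₀, one_mul]
  refine and_congr_right fun _ => ⟨fun h x hx => ?_, fun h x hx => ?_⟩
  · rw [Finset.mem_filter] at hx
    exact (hphase x).1 (h x (mem_traceOneSet.2 hx.2.1))
  · by_cases hxx : x = x₀
    · rw [hxx, traceChar_of_Ftr_eq_zero hcx₀, one_mul]
    · exact (hphase x).2 (h x (by simp [mem_traceOneSet.1 hx, hxx]))

end PerfectEdgeStateTransfer

open Real

section Phases

lemma mem_zmultiples_pi_of_cexp_sq_eq_one {θ : ℝ} (h : cexp (θ * I) ^ 2 = 1) :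
    θ ∈ AddSubgroup.zmultiples π := by
  rw [← Complex.exp_nat_mul, Complex.exp_eq_one_iff] at h
  obtain ⟨n, hn⟩ := h
  have him := congrArg Complex.im hn
  simp at him
  exact AddSubgroup.mem_zmultiples_iff.2 ⟨n, by rw [zsmul_eq_mul]; linarith⟩

lemma cexp_mul_mul_I_eq_zpow (t : ℝ) (M q : ℤ) :
    cexp (t * (M * q : ℤ) * I) = cexp (t * M * I) ^ q := by
  rw [← Complex.exp_int_mul]
  push_cast
  ring_nf

lemma exists_nat_of_cexp_mul_I_eq_neg_one {θ : ℝ} (h : cexp (θ * I) = -1) (hθ : 0 < θ) :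
    ∃ u : ℕ, θ = (2 * u + 1) * π := by
  have h1 : cexp ((θ - π : ℝ) * I) = 1 := by
    rw [ofReal_sub, sub_mul, Complex.exp_sub, h, Complex.exp_pi_mul_I, div_self (by norm_num)]
  obtain ⟨n, hn⟩ := Complex.exp_eq_one_iff.1 h1
  have him := congrArg Complex.im hn
  simp at him
  have hθn : θ = (2 * n + 1) * π := by linarith
  have hn0 : 0 ≤ n := by
    have : (0 : ℝ) < 2 * n + 1 := pos_of_mul_pos_left (hθn ▸ hθ) pi_pos.le
    have : (0 : ℤ) < 2 * n + 1 := by exact_mod_cast this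
    omega
  lift n to ℕ using hn0
  exact ⟨n, by exact_mod_cast hθn⟩

variable {ι : Type*} {D : Finset ι} {δ : ι → ℤ}

lemma cexp_mul_gcd_eq_neg_one {ε : ι → ℂ} {t : ℝ} (hε : ∀ x ∈ D, ε x ^ 2 = 1)
    (h : ∀ x ∈ D, cexp (t * δ x * I) = ε x) {x₁ : ι} (hx₁ : x₁ ∈ D) (hε₁ : ε x₁ = -1) :
    cexp (t * D.gcd δ * I) = -1 := by
  obtain ⟨N, hN⟩ : ∃ N : ℤ, N • π = t * D.gcd δ := by
    rw [← AddSubgroup.mem_zmultiples_iff]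
    obtain ⟨g, hg⟩ := D.gcd_eq_sum_mul δ
    rw [hg, Int.cast_sum, Finset.mul_sum]
    refine AddSubgroup.sum_mem _ fun x hx => ?_
    have hx : t * δ x ∈ AddSubgroup.zmultiples π :=
      mem_zmultiples_pi_of_cexp_sq_eq_one (by push_cast; rw [h x hx, hε x hx])
    rw [Int.cast_mul, ← mul_assoc, mul_comm, ← zsmul_eq_mul]
    exact AddSubgroup.zsmul_mem _ hx _
  have hsq : cexp (t * D.gcd δ * I) ^ 2 = 1 := by
    have hN' : (t : ℂ) * D.gcd δ = N * π := by
      exact_mod_cast (by rw [← hN, zsmul_eq_mul] : t * D.gcd δ = N * π)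
    rw [← Complex.exp_nat_mul, Complex.exp_eq_one_iff]
    exact ⟨N, by push_cast; linear_combination (2 * I) * hN'⟩
  refine (sq_eq_one_iff.1 hsq).resolve_left fun h1 => ?_
  obtain ⟨q, hq⟩ := Finset.gcd_dvd (f := δ) hx₁
  have h₁ := h x₁ hx₁
  rw [hε₁, hq, cexp_mul_mul_I_eq_zpow, h1, _root_.one_zpow] at h₁
  norm_num at h₁

lemma cexp_mul_eq_of_cexp_mul_gcd_eq {s t : ℝ}
    (h : cexp (s * D.gcd δ * I) = cexp (t * D.gcd δ * I)) {x : ι} (hx : x ∈ D) :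
    cexp (s * δ x * I) = cexp (t * δ x * I) := by
  obtain ⟨q, hq⟩ := Finset.gcd_dvd (f := δ) hx
  rw [hq, cexp_mul_mul_I_eq_zpow, cexp_mul_mul_I_eq_zpow, h]

lemma gcd_pos_of_cexp_mul_gcd_eq_neg_one {t : ℝ} (h : cexp (t * D.gcd δ * I) = -1) :
    0 < D.gcd δ := by
  refine (Int.nonneg_of_normalize_eq_self Finset.normalize_gcd).lt_of_ne' fun h0 => ?_
  rw [h0] at h
  norm_num at h

variable {ε : ι → ℂ} {x₁ : ι}

lemma exists_nat_eq_odd_mul_pi_div_gcd (hε : ∀ x ∈ D, ε x ^ 2 = 1) (hx₁ : x₁ ∈ D)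
    (hε₁ : ε x₁ = -1) {t : ℝ} (ht : 0 < t) (h : ∀ x ∈ D, cexp (t * δ x * I) = ε x) :
    ∃ u : ℕ, t = (2 * u + 1) * π / D.gcd δ := by
  have hneg := cexp_mul_gcd_eq_neg_one hε h hx₁ hε₁
  have hM : (0 : ℝ) < D.gcd δ := by exact_mod_cast gcd_pos_of_cexp_mul_gcd_eq_neg_one hneg
  obtain ⟨u, hu⟩ := exists_nat_of_cexp_mul_I_eq_neg_one (θ := t * D.gcd δ)
    (by push_cast; exact hneg) (by positivity)
  exact ⟨u, by rw [eq_div_iff hM.ne', hu]⟩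

lemma isLeast_pi_div_gcd (hε : ∀ x ∈ D, ε x ^ 2 = 1) (hx₁ : x₁ ∈ D) (hε₁ : ε x₁ = -1) {t : ℝ}
    (h : ∀ x ∈ D, cexp (t * δ x * I) = ε x) :
    IsLeast {t' : ℝ | 0 < t' ∧ ∀ x ∈ D, cexp (t' * δ x * I) = ε x} (π / D.gcd δ) := by
  have hneg := cexp_mul_gcd_eq_neg_one hε h hx₁ hε₁
  have hM : (0 : ℝ) < D.gcd δ := by exact_mod_cast gcd_pos_of_cexp_mul_gcd_eq_neg_one hneg
  refine ⟨⟨div_pos pi_pos hM, fun x hx => (cexp_mul_eq_of_cexp_mul_gcd_eq ?_ hx).trans (h x hx)⟩,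
    fun t' ⟨ht', h'⟩ => ?_⟩
  · have hM' : ((D.gcd δ : ℤ) : ℂ) ≠ 0 := by exact_mod_cast hM.ne'
    rw [hneg]
    push_cast
    rw [div_mul_cancel₀ _ hM', exp_pi_mul_I]
  · obtain ⟨u, rfl⟩ := exists_nat_eq_odd_mul_pi_div_gcd hε hx₁ hε₁ ht' h'
    gcongr
    exact le_mul_of_one_le_left pi_pos.le (by linarith [u.cast_nonneg (α := ℝ)])

end Phases

theorem hasPEST_time_form_general {m : ℕ}
    (S : Finset (GaloisField 2 m))
    (c d : GaloisField 2 m) (hc0 : c ≠ 0)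
    (t : ℝ) (ht : 0 < t) (hP : hasPEST S 0 1 c d t)
    (x₀ : GaloisField 2 m) (hx₀ : Ftr (c * x₀) = 0 ∧ Ftr x₀ = 1)
    (M : ℤ)
    (hM : M = (univ.filter (fun x : GaloisField 2 m => Ftr x = 1 ∧ x ≠ x₀)).gcd
      (fun x => lamF S x₀ - lamF S x)) :
    (∃ u : ℕ, t = (2 * u + 1) * Real.pi / M) ∧
      IsLeast {t' : ℝ | 0 < t' ∧ hasPEST S 0 1 c d t'} (Real.pi / M) := by
  obtain ⟨hcx₀, hx₀⟩ := hx₀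
  have hd := ((hasPEST_zero_one_iff_forall_cexp hx₀ hcx₀).1 hP).1
  have hpest (t' : ℝ) := (hasPEST_zero_one_iff_forall_cexp (S := S) (t := t') hx₀ hcx₀).trans
    (and_iff_right hd)
  obtain ⟨x₁, hx₁, hcx₁⟩ := exists_Ftr_eq_one_Ftr_mul_eq_one hc0
  have hx₁D : x₁ ∈ univ.filter (fun x : GaloisField 2 m => Ftr x = 1 ∧ x ≠ x₀) := by
    simp only [Finset.mem_filter, Finset.mem_univ, true_and]
    exact ⟨hx₁, by rintro rfl; simp_all⟩
  have hε (x : GaloisField 2 m) (_ : x ∈ univ.filter fun x => Ftr x = 1 ∧ x ≠ x₀) :=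
    traceChar_sq (c * x)
  have hε₁ := traceChar_of_Ftr_eq_one hcx₁
  subst hM
  refine ⟨exists_nat_eq_odd_mul_pi_div_gcd hε hx₁D hε₁ ht ((hpest t).1 hP), ?_⟩
  simpa only [hpest] using isLeast_pi_div_gcd hε hx₁D hε₁ ((hpest t).1 hP)

/-- If `Cay(𝔽_{2^m}, S)` has PEST from `(0,1)` to `(c,d)` at time `t`, then
`t = (2u+1)π/M` for some non-negative integer `u`, where
`M = gcd{λ_{x₀} - λ_x : x ∈ T₁, x ≠ x₀}`; in particular the minimum PEST time is `π/M`. -/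
theorem hasPEST_time_form {m : ℕ} (hm : 1 ≤ m)
    (S : Finset (GaloisField 2 m)) (h0 : (0 : GaloisField 2 m) ∉ S)
    (h1 : (1 : GaloisField 2 m) ∈ S)
    (hgen : AddSubgroup.closure (S : Set (GaloisField 2 m)) = ⊤)
    (c d : GaloisField 2 m) (hcd : c + d ∈ S) (hc0 : c ≠ 0) (hc1 : c ≠ 1)
    (t : ℝ) (ht : 0 < t) (hP : hasPEST S 0 1 c d t)
    (x₀ : GaloisField 2 m) (hx₀ : Ftr (c * x₀) = 0 ∧ Ftr x₀ = 1)
    (M : ℤ)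
    (hM : M = (univ.filter (fun x : GaloisField 2 m => Ftr x = 1 ∧ x ≠ x₀)).gcd
      (fun x => lamF S x₀ - lamF S x)) :
    (∃ u : ℕ, t = (2 * u + 1) * Real.pi / M) ∧
      IsLeast {t' : ℝ | 0 < t' ∧ hasPEST S 0 1 c d t'} (Real.pi / M) :=
  hasPEST_time_form_general S c d hc0 t ht hP x₀ hx₀ M hM
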